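/- If H is a retract of a finite connected graph G, then c(H) ≤ c(G), where c denotes the cop number. -/
import Mathlib


open SimpleGraph

/-- A strategy for `k` cops on a graph `G`: initial positions, and a move
function; each cop stays put or moves along an edge. -/
structure CopStrategy {V : Type*} (G : SimpleGraph V) (k : ℕ) where
  init : Fin k → V
  move : (Fin k → V) → V → (Fin k → V)
  valid : ∀ c r i, move c r i = c i ∨ G.Adj (c i) (move c r i)

/-- A strategy for the robber: an initial position (chosen after seeing the
cops' initial positions) and a move function; the robber stays put or moves
along an edge. -/
structure RobberStrategy {V : Type*} (G : SimpleGraph V) (k : ℕ) where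
  init : (Fin k → V) → V
  move : (Fin k → V) → V → V
  valid : ∀ c r, move c r = r ∨ G.Adj r (move c r)

/-- The sequence of game states `(cop positions, robber position)`: in each
round the cops move first, then the robber. -/
def gamePlay {V : Type*} {G : SimpleGraph V} {k : ℕ} (S : CopStrategy G k)
    (R : RobberStrategy G k) : ℕ → (Fin k → V) × V
  | 0 => (S.init, R.init S.init)
  | (t + 1) =>
      let p := gamePlay S R t
      let c' := S.move p.1 p.2
      (c', R.move c' p.2)

/-- `k` cops have a winning strategy on `G`: for every robber strategy, at some
point a cop occupies the robber's vertex (either at a state, or in the middle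
of a round just after the cops move). -/
def CopsWin {V : Type*} (G : SimpleGraph V) (k : ℕ) : Prop :=
  ∃ S : CopStrategy G k, ∀ R : RobberStrategy G k, ∃ t, ∃ i : Fin k,
    (gamePlay S R t).1 i = (gamePlay S R t).2 ∨
    S.move (gamePlay S R t).1 (gamePlay S R t).2 i = (gamePlay S R t).2

/-- The cop number of `G`: the least number of cops that can guarantee
capturing the robber. -/
noncomputable def copNumber {V : Type*} (G : SimpleGraph V) : ℕ :=
  sInf {k | CopsWin G k}

/-! ### Auxiliary development -/

/-- `Wn G k n c v` : with cop positions `c` and robber position `v` (cops to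
move), `k` cops can force a capture within `n` rounds. -/
def Wn {V : Type*} (G : SimpleGraph V) (k : ℕ) : ℕ → (Fin k → V) → V → Prop
  | 0, c, v => ∃ i, c i = v
  | n + 1, c, v => (∃ i, c i = v) ∨
      ∃ c' : Fin k → V, (∀ i, c' i = c i ∨ G.Adj (c i) (c' i)) ∧
        ((∃ i, c' i = v) ∨ ∀ v', (v' = v ∨ G.Adj v v') → Wn G k n c' v')

lemma Wn_succ {V : Type*} {G : SimpleGraph V} {k n : ℕ} {c : Fin k → V} {v : V} :
    Wn G k (n + 1) c v ↔ (∃ i, c i = v) ∨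
      ∃ c' : Fin k → V, (∀ i, c' i = c i ∨ G.Adj (c i) (c' i)) ∧
        ((∃ i, c' i = v) ∨ ∀ v', (v' = v ∨ G.Adj v v') → Wn G k n c' v') := Iff.rfl

lemma Wn_zero {V : Type*} {G : SimpleGraph V} {k : ℕ} {c : Fin k → V} {v : V} :
    Wn G k 0 c v ↔ ∃ i, c i = v := Iff.rfl

lemma Wn_mono {V : Type*} {G : SimpleGraph V} {k : ℕ} :
    ∀ {n : ℕ} {c : Fin k → V} {v : V}, Wn G k n c v → Wn G k (n + 1) c v := by
  intro n
  induction n with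
  | zero => intro c v h; exact Or.inl h
  | succ n ih =>
      rintro c v (h | ⟨c', hval, h⟩)
      · exact Or.inl h
      · exact Or.inr ⟨c', hval, h.imp id (fun hh v' hv' => ih (hh v' hv'))⟩

lemma Wn_le_mono {V : Type*} {G : SimpleGraph V} {k : ℕ} {m n : ℕ} (hmn : m ≤ n)
    {c : Fin k → V} {v : V} (h : Wn G k m c v) : Wn G k n c v := by
  induction n with
  | zero => rwa [Nat.le_zero.mp hmn] at h
  | succ n ih =>
      rcases Nat.lt_or_ge m (n + 1) with h' | h'
      · exact Wn_mono (ih (Nat.lt_succ_iff.mp h'))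
      · rwa [Nat.le_antisymm hmn h'] at h

/-- Rank of a cop-to-move position. -/
noncomputable def wrank {V : Type*} (G : SimpleGraph V) (k : ℕ) (c : Fin k → V) (v : V) : ℕ :=
  sInf {n | Wn G k n c v}

/-- The condition used by the canonical cop move. -/
def CondP {V : Type*} (G : SimpleGraph V) (k : ℕ) (c : Fin k → V) (v : V) : Prop :=
  ∃ c' : Fin k → V, (∀ i, c' i = c i ∨ G.Adj (c i) (c' i)) ∧
    ((∃ i, c' i = v) ∨ ∀ v', (v' = v ∨ G.Adj v v') → Wn G k (wrank G k c v - 1) c' v')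

open Classical in
/-- The canonical cop move extracted from `Wn`. -/
noncomputable def copMove {V : Type*} (G : SimpleGraph V) (k : ℕ)
    (c : Fin k → V) (v : V) : Fin k → V :=
  if h : CondP G k c v then h.choose else c

lemma copMove_valid {V : Type*} (G : SimpleGraph V) (k : ℕ) (c : Fin k → V) (v : V) (i : Fin k) :
    copMove G k c v i = c i ∨ G.Adj (c i) (copMove G k c v i) := by
  unfold copMove
  split
  · next h => exact h.choose_spec.1 i
  · exact Or.inl rfl

lemma copMove_spec {V : Type*} {G : SimpleGraph V} {k : ℕ} {c : Fin k → V} {v : V}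
    {n : ℕ} (hW : Wn G k n c v) (hnc : ¬ ∃ i, c i = v) :
    (∃ i, copMove G k c v i = v) ∨
      ∀ v', (v' = v ∨ G.Adj v v') → Wn G k (wrank G k c v - 1) (copMove G k c v) v' := by
  have hne : Set.Nonempty {m | Wn G k m c v} := ⟨n, hW⟩
  have hmem : Wn G k (wrank G k c v) c v := Nat.sInf_mem hne
  have hpos : wrank G k c v ≠ 0 := by
    intro h0
    rw [h0] at hmem
    exact hnc hmem
  obtain ⟨m, hm⟩ := Nat.exists_eq_succ_of_ne_zero hpos
  have hWm : Wn G k (m + 1) c v := by rwa [hm] at hmem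
  rcases hWm with h | ⟨c', hval, hrest⟩
  · exact absurd h hnc
  · have hcond : CondP G k c v := by
      refine ⟨c', hval, ?_⟩
      have : wrank G k c v - 1 = m := by omega
      rw [this]; exact hrest
    rw [copMove, dif_pos hcond]
    exact hcond.choose_spec.2

lemma wrank_le {V : Type*} {G : SimpleGraph V} {k : ℕ} {c : Fin k → V} {v : V}
    {n : ℕ} (hW : Wn G k n c v) : wrank G k c v ≤ n := Nat.sInf_le hW

/-- From a uniform capture bound at some initial positions, the cops win. -/
lemma copsWin_of_Wn {V : Type*} (G : SimpleGraph V) (k : ℕ) (c0 : Fin k → V)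
    (h : ∀ v, ∃ n, Wn G k n c0 v) : CopsWin G k := by
  refine ⟨⟨c0, copMove G k, copMove_valid G k⟩, ?_⟩
  intro R
  set St : CopStrategy G k := ⟨c0, copMove G k, copMove_valid G k⟩ with hSt
  have key : ∀ n : ℕ, ∀ t : ℕ,
      Wn G k n (gamePlay St R t).1 (gamePlay St R t).2 →
      ∃ t', ∃ i : Fin k,
        (gamePlay St R t').1 i = (gamePlay St R t').2 ∨
        St.move (gamePlay St R t').1 (gamePlay St R t').2 i = (gamePlay St R t').2 := by
    intro n
    induction n using Nat.strong_induction_on with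
    | _ n ih =>
      intro t hW
      set c := (gamePlay St R t).1 with hc
      set v := (gamePlay St R t).2 with hv
      by_cases hcap : ∃ i, c i = v
      · obtain ⟨i, hi⟩ := hcap
        exact ⟨t, i, Or.inl hi⟩
      · have hspec := copMove_spec hW hcap
        have hmove : St.move c v = copMove G k c v := rfl
        rcases hspec with ⟨i, hi⟩ | hall
        · exact ⟨t, i, Or.inr (by rw [hmove]; exact hi)⟩
        · have hvalid := R.valid (copMove G k c v) v
          have hnext : gamePlay St R (t + 1) =
              (copMove G k c v, R.move (copMove G k c v) v) := by
            show (St.move (gamePlay St R t).1 (gamePlay St R t).2,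
              R.move (St.move (gamePlay St R t).1 (gamePlay St R t).2) (gamePlay St R t).2) = _
            rw [← hc, ← hv, hmove]
          have hW' : Wn G k (wrank G k c v - 1)
              (gamePlay St R (t + 1)).1 (gamePlay St R (t + 1)).2 := by
            rw [hnext]
            exact hall _ hvalid
          have hlt : wrank G k c v - 1 < n := by
            have h1 : wrank G k c v ≤ n := wrank_le hW
            have h2 : wrank G k c v ≠ 0 := by
              intro h0
              have hmem0 : Wn G k (wrank G k c v) c v :=
                Nat.sInf_mem (⟨n, hW⟩ : Set.Nonempty {m | Wn G k m c v})
              rw [h0] at hmem0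
              exact hcap hmem0
            omega
          exact ih _ hlt (t + 1) hW'
  obtain ⟨n, hn⟩ := h (R.init c0)
  have h0 : Wn G k n (gamePlay St R 0).1 (gamePlay St R 0).2 := by
    show Wn G k n St.init (R.init St.init)
    exact hn
  exact key n 0 h0

/-- On a finite graph, if the cops win then from the winning initial positions
every robber position is captured within a bounded number of rounds. -/
lemma Wn_of_copsWin {V : Type*} [Fintype V] {G : SimpleGraph V} {k : ℕ}
    (h : CopsWin G k) : ∃ c0 : Fin k → V, ∀ v, ∃ n, Wn G k n c0 v := by
  classical
  obtain ⟨St, hSt⟩ := h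
  refine ⟨St.init, fun v => ?_⟩
  by_contra hnot
  push_neg at hnot
  -- X c w : robber survives forever from state (c, w)
  set X : (Fin k → V) → V → Prop := fun c w => ∀ n, ¬ Wn G k n c w with hX
  have hXv : X St.init v := hnot
  -- key step: from a surviving state, any cop move leads to no capture and a
  -- surviving robber reply
  have step : ∀ c w, X c w → ∀ c' : Fin k → V, (∀ i, c' i = c i ∨ G.Adj (c i) (c' i)) →
      (¬ ∃ i, c' i = w) ∧ ∃ w', (w' = w ∨ G.Adj w w') ∧ X c' w' := by
    intro c w hXc c' hval
    constructor
    · intro hcapt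
      exact hXc 1 (Or.inr ⟨c', hval, Or.inl hcapt⟩)
    · by_contra hno
      push_neg at hno
      have hall : ∀ w' : V, ∃ m, (w' = w ∨ G.Adj w w') → Wn G k m c' w' := by
        intro w'
        by_cases hv' : w' = w ∨ G.Adj w w'
        · obtain ⟨m, hm⟩ := not_forall.mp (hno w' hv')
          exact ⟨m, fun _ => not_not.mp hm⟩
        · exact ⟨0, fun hh => absurd hh hv'⟩
      choose g hg using hall
      set N := Finset.univ.sup g with hN
      have hWN : Wn G k (N + 1) c w := by
        refine Or.inr ⟨c', hval, Or.inr ?_⟩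
        intro w' hw'
        exact Wn_le_mono (Finset.le_sup (Finset.mem_univ w')) (hg w' hw')
      exact hXc (N + 1) hWN
  -- robber strategy staying in surviving states
  set rmove : (Fin k → V) → V → V := fun c' w =>
    if h : ∃ w', (w' = w ∨ G.Adj w w') ∧ X c' w' then h.choose else w with hrmove
  have rvalid : ∀ c' w, rmove c' w = w ∨ G.Adj w (rmove c' w) := by
    intro c' w
    rw [hrmove]
    dsimp only
    split
    · next h => exact h.choose_spec.1
    · exact Or.inl rfl
  set R : RobberStrategy G k := ⟨fun _ => v, rmove, rvalid⟩ with hR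
  -- invariant
  have hinv : ∀ t, X (gamePlay St R t).1 (gamePlay St R t).2 := by
    intro t
    induction t with
    | zero => exact hXv
    | succ t iht =>
        set c := (gamePlay St R t).1 with hc
        set w := (gamePlay St R t).2 with hw
        have hval := St.valid c w
        obtain ⟨-, w', hw', hXw'⟩ := step c w iht (St.move c w) hval
        have hcond : ∃ w'', (w'' = w ∨ G.Adj w w'') ∧ X (St.move c w) w'' := ⟨w', hw', hXw'⟩
        have hnext : gamePlay St R (t + 1) = (St.move c w, rmove (St.move c w) w) := rfl
        have : rmove (St.move c w) w = hcond.choose := by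
          rw [hrmove]; dsimp only; rw [dif_pos hcond]
        rw [hnext, this]
        exact hcond.choose_spec.2
  obtain ⟨t, i, hcap⟩ := hSt R
  rcases hcap with hcap | hcap
  · exact hinv t 0 ⟨i, hcap⟩
  · have hval := St.valid (gamePlay St R t).1 (gamePlay St R t).2
    obtain ⟨hnc, -⟩ := step _ _ (hinv t) _ hval
    exact hnc ⟨i, hcap⟩

/-- A finite graph has some winning number of cops (one per vertex). -/
lemma copsWin_card {V : Type*} [Fintype V] (G : SimpleGraph V) :
    CopsWin G (Fintype.card V) := by
  classical
  refine ⟨⟨fun i => (Fintype.equivFin V).symm i, fun c _ => c, fun c r i => Or.inl rfl⟩, ?_⟩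
  intro R
  refine ⟨0, Fintype.equivFin V (R.init fun i => (Fintype.equivFin V).symm i), Or.inl ?_⟩
  show (Fintype.equivFin V).symm (Fintype.equivFin V _) = _
  simp [gamePlay]

/-- Retraction lemma: `Wn` transfers from `G` to the induced subgraph on `S`
via the retraction `r`. -/
lemma Wn_retract {V : Type*} {G : SimpleGraph V} {S : Set V} {r : V → V}
    (hmem : ∀ v, r v ∈ S) (hfix : ∀ v ∈ S, r v = v)
    (hhom : ∀ u v, G.Adj u v → r u = r v ∨ G.Adj (r u) (r v)) {k : ℕ} :
    ∀ (n : ℕ) (c : Fin k → V) (v : V) (hv : v ∈ S), Wn G k n c v →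
      Wn (G.induce S) k n (fun i => ⟨r (c i), hmem _⟩) ⟨v, hv⟩ := by
  intro n
  induction n with
  | zero =>
      rintro c v hv ⟨i, hi⟩
      exact ⟨i, by simp [hi, hfix v hv]⟩
  | succ n ih =>
      rintro c v hv (⟨i, hi⟩ | ⟨c', hval, hrest⟩)
      · exact Or.inl ⟨i, by simp [hi, hfix v hv]⟩
      · refine Or.inr ⟨fun i => ⟨r (c' i), hmem _⟩, ?_, ?_⟩
        · intro i
          rcases hval i with h | h
          · exact Or.inl (by simp [h])
          · rcases hhom _ _ h with h' | h'
            · exact Or.inl (by simp [h'])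
            · exact Or.inr (by simpa using h')
        · rcases hrest with ⟨i, hi⟩ | hrest
          · exact Or.inl ⟨i, by simp [hi, hfix v hv]⟩
          · refine Or.inr ?_
            intro v' hv'
            have hv'G : (v' : V) = v ∨ G.Adj v (v' : V) := by
              rcases hv' with h | h
              · exact Or.inl (by rw [h])
              · exact Or.inr (by simpa using h)
            exact ih c' (v' : V) v'.2 (hrest _ hv'G)

/-- If `H` is a retract of a finite connected graph `G`, then `c(H) ≤ c(G)`. -/
theorem stmt7 {V : Type*} [Fintype V] (G : SimpleGraph V) (hconn : G.Connected)
    (S : Set V) (r : V → V)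
    (hmem : ∀ v, r v ∈ S)
    (hfix : ∀ v ∈ S, r v = v)
    (hhom : ∀ u v, G.Adj u v → r u = r v ∨ G.Adj (r u) (r v)) :
    copNumber (G.induce S) ≤ copNumber G := by
  classical
  have hne : Set.Nonempty {k | CopsWin G k} := ⟨Fintype.card V, copsWin_card G⟩
  have hk : CopsWin G (copNumber G) := Nat.sInf_mem hne
  obtain ⟨c0, hc0⟩ := Wn_of_copsWin hk
  have hH : CopsWin (G.induce S) (copNumber G) := by
    apply copsWin_of_Wn (G.induce S) (copNumber G) (fun i => ⟨r (c0 i), hmem _⟩)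
    rintro ⟨v, hv⟩
    obtain ⟨n, hn⟩ := hc0 v
    exact ⟨n, Wn_retract hmem hfix hhom n c0 v hv hn⟩
  exact Nat.sInf_le hH
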